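/- Every formula in the stability class ST is stable in every strict finitistic model: if k forces ⌐⌐S then k forces S, for S ∈ ST. -/
import Mathlib


/-- Formulas of the (domain-extended) language of strict finitistic first-order
logic: atoms `atom P ds` (predicate symbol `P` applied to domain elements),
the existence predicate `E`, the connectives, global negation `neg`, and the
two modes (global / local) of universal and existential quantification. -/
inductive Fm (D : Type) : Type
  | top
  | bot
  | atom (P : ℕ) (ds : List D)
  | E (d : D)
  | conj (A B : Fm D)
  | disj (A B : Fm D)
  | impl (A B : Fm D)
  | neg (A : Fm D)
  | allG (A : D → Fm D)
  | allL (A : D → Fm D)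
  | exG (A : D → Fm D)
  | exL (A : D → Fm D)

/-- Weak negation `⌐A := A → ⊥`. -/
def Fm.wneg {D : Type} (A : Fm D) : Fm D := Fm.impl A Fm.bot

/-- A strict finitistic model: a rooted partially ordered Kripke frame with a
constant domain `D` and a monotone valuation of atoms (including the
existence predicate `E`). -/
structure SFModel (D : Type) : Type 1 where
  K : Type
  le : K → K → Prop
  refl : ∀ k, le k k
  trans : ∀ {a b c}, le a b → le b c → le a c
  antisymm : ∀ {a b}, le a b → le b a → a = b
  root : K
  root_le : ∀ k, le root k
  atomVal : ℕ → List D → K → Prop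
  EVal : D → K → Prop
  atom_mono : ∀ {P ds k k'}, le k k' → atomVal P ds k → atomVal P ds k'
  E_mono : ∀ {d k k'}, le k k' → EVal d k → EVal d k'

/-- The strict finitistic forcing relation `k ⊨ A`. -/
def SFModel.force {D : Type} (W : SFModel D) : W.K → Fm D → Prop
  | _, Fm.top => True
  | _, Fm.bot => False
  | k, Fm.atom P ds => W.atomVal P ds k
  | k, Fm.E d => W.EVal d k
  | k, Fm.conj A B => W.force k A ∧ W.force k B
  | k, Fm.disj A B => W.force k A ∨ W.force k B
  | k, Fm.impl A B => ∀ k', W.le k k' → W.force k' A → ∃ k'', W.le k' k'' ∧ W.force k'' B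
  | _, Fm.neg A => ∀ l, ¬ W.force l A
  | k, Fm.allG A => ∀ (d : D) (k' : W.K), W.le k k' → ∃ k'', W.le k' k'' ∧ W.force k'' (A d)
  | k, Fm.allL A => ∀ (d : D) (k' : W.K), W.le k k' → W.EVal d k' →
      ∃ k'', W.le k' k'' ∧ W.force k'' (A d)
  | k, Fm.exG A => ∃ d : D, W.force k (A d)
  | k, Fm.exL A => ∃ d : D, W.EVal d k ∧ W.force k (A d)

/-- `A` is valid in `W`: forced at every node. -/
def SFModel.valid {D : Type} (W : SFModel D) (A : Fm D) : Prop := ∀ k, W.force k A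

/-- `A` is assertible in `W`: forced at some node. -/
def SFModel.assertible {D : Type} (W : SFModel D) (A : Fm D) : Prop := ∃ k, W.force k A

/-- `A` is prevalent in `W`: above every node it is eventually forced. -/
def SFModel.prevalent {D : Type} (W : SFModel D) (A : Fm D) : Prop :=
  ∀ k, ∃ k', W.le k k' ∧ W.force k' A

/-- Atomic prevalence property: every assertible closed atom (including `E`)
is prevalent. -/
def SFModel.atomicPrev {D : Type} (W : SFModel D) : Prop :=
  (∀ (P : ℕ) (ds : List D), W.assertible (Fm.atom P ds) → W.prevalent (Fm.atom P ds)) ∧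
  (∀ d : D, W.assertible (Fm.E d) → W.prevalent (Fm.E d))

/-- Formula prevalence property: every assertible closed formula is prevalent. -/
def SFModel.formulaPrev {D : Type} (W : SFModel D) : Prop :=
  ∀ A : Fm D, W.assertible A → W.prevalent A

/-- Object prevalence property: `E(d)` is prevalent for every domain element. -/
def SFModel.objectPrev {D : Type} (W : SFModel D) : Prop :=
  ∀ d : D, W.prevalent (Fm.E d)

/-- A prevalent model: both the formula and object prevalence properties. -/
def SFModel.prevModel {D : Type} (W : SFModel D) : Prop :=
  W.formulaPrev ∧ W.objectPrev

/-- The class of global negative (GN) formulas. -/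
inductive GN {D : Type} : Fm D → Prop
  | bot : GN Fm.bot
  | neg (A : Fm D) : GN (Fm.neg A)
  | conj {N N' : Fm D} : GN N → GN N' → GN (Fm.conj N N')
  | disj {N N' : Fm D} : GN N → GN N' → GN (Fm.disj N N')
  | impl {N N' : Fm D} : GN N → GN N' → GN (Fm.impl N N')
  | allG {A : D → Fm D} : (∀ d, GN (A d)) → GN (Fm.allG A)
  | exG {A : D → Fm D} : (∀ d, GN (A d)) → GN (Fm.exG A)

/-- The stability class STcl. -/
inductive STcl {D : Type} : Fm D → Prop
  | top : STcl Fm.top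
  | gn {N : Fm D} : GN N → STcl N
  | conj {S S' : Fm D} : STcl S → STcl S' → STcl (Fm.conj S S')
  | disjL {S N : Fm D} : STcl S → GN N → STcl (Fm.disj S N)
  | disjR {N S : Fm D} : GN N → STcl S → STcl (Fm.disj N S)
  | impl (A B : Fm D) : STcl (Fm.impl A B)
  | allG (A : D → Fm D) : STcl (Fm.allG A)
  | allL (A : D → Fm D) : STcl (Fm.allL A)

/-- Forcing is monotone along the accessibility relation. -/
theorem force_mono {D : Type} (W : SFModel D) {k k' : W.K} (hle : W.le k k') :
    ∀ A : Fm D, W.force k A → W.force k' A := by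
  intro A
  induction A generalizing k k' with
  | top => intro _; trivial
  | bot => intro h; exact h
  | atom P ds => exact W.atom_mono hle
  | E d => exact W.E_mono hle
  | conj A B ihA ihB => intro h; exact ⟨ihA hle h.1, ihB hle h.2⟩
  | disj A B ihA ihB =>
      intro h; rcases h with h | h
      · exact Or.inl (ihA hle h)
      · exact Or.inr (ihB hle h)
  | impl A B ihA ihB =>
      intro h l hl hA; exact h l (W.trans hle hl) hA
  | neg A ih => intro h; exact h
  | allG A ih => intro h d l hl; exact h d l (W.trans hle hl)
  | allL A ih => intro h d l hl hE; exact h d l (W.trans hle hl) hE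
  | exG A ih => rintro ⟨d, hd⟩; exact ⟨d, ih d hle hd⟩
  | exL A ih => rintro ⟨d, hE, hd⟩; exact ⟨d, W.E_mono hle hE, ih d hle hd⟩

/-- GN formulas have a node-independent truth value. -/
theorem GN_const {D : Type} (W : SFModel D) {N : Fm D} (hN : GN N) :
    ∀ k l : W.K, W.force k N → W.force l N := by
  induction hN with
  | bot => intro k l h; exact h.elim
  | neg A => intro k l h; exact h
  | conj _ _ ih1 ih2 => intro k l h; exact ⟨ih1 k l h.1, ih2 k l h.2⟩
  | disj _ _ ih1 ih2 =>
      intro k l h; rcases h with h | h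
      · exact Or.inl (ih1 k l h)
      · exact Or.inr (ih2 k l h)
  | impl _ _ ih1 ih2 =>
      intro k l h l' hl' hNl'
      obtain ⟨k'', _, hN'⟩ := h k (W.refl k) (ih1 l' k hNl')
      exact ⟨l', W.refl l', ih2 k'' l' hN'⟩
  | allG _ ih =>
      intro k l h d l' hl'
      obtain ⟨k'', _, hA⟩ := h d k (W.refl k)
      exact ⟨l', W.refl l', ih d k'' l' hA⟩
  | exG _ ih =>
      rintro k l ⟨d, hd⟩; exact ⟨d, ih d k l hd⟩

/-- From `k ⊨ ⌐⌐S`: above every node above `k`, `S` is eventually forced. -/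
theorem dd_of_wneg2 {D : Type} (W : SFModel D) {S : Fm D} {k : W.K}
    (h : W.force k (Fm.wneg (Fm.wneg S))) :
    ∀ k', W.le k k' → ∃ k'', W.le k' k'' ∧ W.force k'' S := by
  intro k' hk'
  by_contra hc
  push_neg at hc
  obtain ⟨_, _, hfalse⟩ := h k' hk' (fun k'' h2 hf => (hc k'' h2 hf).elim)
  exact hfalse

/-- Converse: eventual forcing of `S` above every node above `k` gives `k ⊨ ⌐⌐S`. -/
theorem wneg2_of_dd {D : Type} (W : SFModel D) {S : Fm D} {k : W.K}
    (h : ∀ k', W.le k k' → ∃ k'', W.le k' k'' ∧ W.force k'' S) :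
    W.force k (Fm.wneg (Fm.wneg S)) := by
  intro k' hk' hw
  obtain ⟨k'', hk'', hS⟩ := h k' hk'
  obtain ⟨_, _, hfalse⟩ := hw k'' hk'' hS
  exact hfalse.elim

/-- Every formula in the stability class STcl is stable in every
strict finitistic model: if `k` forces `⌐⌐S` then `k` forces `S`. -/
theorem ST_stable {D : Type} [Nonempty D] (W : SFModel D) (S : Fm D) (hS : STcl S)
    (k : W.K) (h : W.force k (Fm.wneg (Fm.wneg S))) : W.force k S := by
  induction hS generalizing k with
  | top => trivial
  | gn hN =>
      obtain ⟨k'', _, hS⟩ := dd_of_wneg2 W h k (W.refl k)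
      exact GN_const W hN k'' k hS
  | conj hS hS' ih ih' =>
      have dd := dd_of_wneg2 W h
      constructor
      · refine ih k (wneg2_of_dd W ?_)
        intro k' hk'
        obtain ⟨k'', hk'', hc⟩ := dd k' hk'
        exact ⟨k'', hk'', hc.1⟩
      · refine ih' k (wneg2_of_dd W ?_)
        intro k' hk'
        obtain ⟨k'', hk'', hc⟩ := dd k' hk'
        exact ⟨k'', hk'', hc.2⟩
  | @disjL S N hS hN ih =>
      have dd := dd_of_wneg2 W h
      by_cases hp : ∃ l, W.force l N
      · obtain ⟨l, hl⟩ := hp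
        exact Or.inr (GN_const W hN l k hl)
      · push_neg at hp
        refine Or.inl (ih k (wneg2_of_dd W ?_))
        intro k' hk'
        obtain ⟨k'', hk'', hc⟩ := dd k' hk'
        rcases hc with hc | hc
        · exact ⟨k'', hk'', hc⟩
        · exact absurd hc (hp k'')
  | @disjR N S hN hS ih =>
      have dd := dd_of_wneg2 W h
      by_cases hp : ∃ l, W.force l N
      · obtain ⟨l, hl⟩ := hp
        exact Or.inl (GN_const W hN l k hl)
      · push_neg at hp
        refine Or.inr (ih k (wneg2_of_dd W ?_))
        intro k' hk'
        obtain ⟨k'', hk'', hc⟩ := dd k' hk'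
        rcases hc with hc | hc
        · exact absurd hc (hp k'')
        · exact ⟨k'', hk'', hc⟩
  | impl A B =>
      have dd := dd_of_wneg2 W h
      intro k' hk' hA
      obtain ⟨k'', hk'', hi⟩ := dd k' hk'
      obtain ⟨k''', hk''', hB⟩ := hi k'' (W.refl k'') (force_mono W hk'' A hA)
      exact ⟨k''', W.trans hk'' hk''', hB⟩
  | allG A =>
      have dd := dd_of_wneg2 W h
      intro d k' hk'
      obtain ⟨k'', hk'', hi⟩ := dd k' hk'
      obtain ⟨k''', hk''', hA⟩ := hi d k'' (W.refl k'')
      exact ⟨k''', W.trans hk'' hk''', hA⟩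
  | allL A =>
      have dd := dd_of_wneg2 W h
      intro d k' hk' hE
      obtain ⟨k'', hk'', hi⟩ := dd k' hk'
      obtain ⟨k''', hk''', hA⟩ := hi d k'' (W.refl k'') (W.E_mono hk'' hE)
      exact ⟨k''', W.trans hk'' hk''', hA⟩
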